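/- There exist infinitely many pairwise non-isomorphic finite-dimensional graded-commutative real algebras of the form ℝ[x₁,x₂,x₃]/(x₁²−λx₂x₃, x₂²−λx₁x₃, x₃²−λx₁x₂) for λ ∈ ℝ \ {1}: the algebras for distinct values λ, λ' outside a finite exceptional set are non-isomorphic as graded algebras. -/

import Mathlib

open MvPolynomial

/-- The ideal `(x₁²−λx₂x₃, x₂²−λx₁x₃, x₃²−λx₁x₂)` in `ℝ[x₁,x₂,x₃]`. -/
noncomputable def Jdl (lam : ℝ) : Ideal (MvPolynomial (Fin 3) ℝ) :=
  Ideal.span {(X 0 : MvPolynomial (Fin 3) ℝ) ^ 2 - C lam * (X 1 * X 2),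
    X 1 ^ 2 - C lam * (X 0 * X 2), X 2 ^ 2 - C lam * (X 0 * X 1)}

/-- The degree-2 part of the graded quotient algebra: the span of the images of
the generators `x₁, x₂, x₃` (each of cohomological degree 2). -/
noncomputable def degTwo (lam : ℝ) :
    Submodule ℝ (MvPolynomial (Fin 3) ℝ ⧸ Jdl lam) :=
  Submodule.span ℝ {Ideal.Quotient.mk (Jdl lam) (X 0),
    Ideal.Quotient.mk (Jdl lam) (X 1), Ideal.Quotient.mk (Jdl lam) (X 2)}

/-
An algebra isomorphism preserving the degree-2 parts is a linear substitution `M` of the generators.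
In degree 6 the algebra is spanned by `x₀x₁x₂ ≠ 0`, and `(∑ vᵢxᵢ)³ = f_λ(v) · x₀x₁x₂` with the Hesse
cubic `f_λ = λ(v₀³ + v₁³ + v₂³) + 6v₀v₁v₂`, so `f_λ' ∘ M = κ f_λ` with `κ ≠ 0`. Covariance of the
Hessian, `Hess (f ∘ M) = (det M)² · (Hess f) ∘ M`, applied to this identity and then to the triangle
`v₀v₁v₂`, which it forces into the pencil, yields `(λ³ + 8)² = (λ'³ + 8)²`, hence `λ = λ'` for
`λ, λ' > 0`. The class `x₀x₁x₂` is seen to be nonzero in an explicit 8-dimensional model, and the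
algebra is finite-dimensional because its generators are nilpotent as soon as `λ³ ≠ 1`.
-/

open Matrix

def cubeSum (v : Fin 3 → ℝ) : ℝ := v 0 ^ 3 + v 1 ^ 3 + v 2 ^ 3

def coordProd (v : Fin 3 → ℝ) : ℝ := v 0 * v 1 * v 2

def hesseForm (a b : ℝ) (v : Fin 3 → ℝ) : ℝ := a * cubeSum v + 6 * b * coordProd v

def hesseTrilin (a b : ℝ) (u v w : Fin 3 → ℝ) : ℝ :=
  a * (u 0 * v 0 * w 0 + u 1 * v 1 * w 1 + u 2 * v 2 * w 2)
    + b * (u 0 * v 1 * w 2 + u 0 * v 2 * w 1 + u 1 * v 0 * w 2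
      + u 1 * v 2 * w 0 + u 2 * v 0 * w 1 + u 2 * v 1 * w 0)

/-- One sixth of the Hessian matrix of `hesseForm a b` at `w`. -/
def hesseHessian (a b : ℝ) (w : Fin 3 → ℝ) : Matrix (Fin 3) (Fin 3) ℝ :=
  !![a * w 0, b * w 2, b * w 1; b * w 2, a * w 1, b * w 0; b * w 1, b * w 0, a * w 2]

theorem hesseTrilin_eq_polarization (a b : ℝ) (u v w : Fin 3 → ℝ) :
    hesseTrilin a b u v w = (hesseForm a b (u + v + w) - hesseForm a b (u + v)
      - hesseForm a b (u + w) - hesseForm a b (v + w)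
      + hesseForm a b u + hesseForm a b v + hesseForm a b w) / 6 := by
  simp only [hesseTrilin, hesseForm, cubeSum, coordProd, Pi.add_apply]
  ring

theorem hesseHessian_apply (a b : ℝ) (w : Fin 3 → ℝ) (i j : Fin 3) :
    hesseHessian a b w i j = hesseTrilin a b (Pi.single i 1) (Pi.single j 1) w := by
  fin_cases i <;> fin_cases j <;> simp [hesseHessian, hesseTrilin]

theorem mul_hesseHessian_mul_transpose_apply (M : Matrix (Fin 3) (Fin 3) ℝ) (a b : ℝ)
    (w : Fin 3 → ℝ) (i j : Fin 3) :
    (M * hesseHessian a b w * Mᵀ) i j = hesseTrilin a b (M i) (M j) w := by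
  simp only [mul_apply, Fin.sum_univ_three, transpose_apply, hesseHessian, hesseTrilin,
    of_apply, cons_val', cons_val_zero, cons_val_one, cons_val_two, empty_val',
    cons_val_fin_one, head_cons, tail_cons, head_fin_const]
  ring

theorem det_hesseHessian (a b : ℝ) (w : Fin 3 → ℝ) :
    (hesseHessian a b w).det = (a ^ 3 + 2 * b ^ 3) * coordProd w - a * b ^ 2 * cubeSum w := by
  simp only [hesseHessian, det_fin_three, of_apply, cons_val', cons_val_zero, cons_val_fin_one,
    cons_val_one, cons_val, coordProd, cubeSum]
  ring

section Covariance

variable {a b a' b' κ : ℝ} {M : Matrix (Fin 3) (Fin 3) ℝ}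

theorem hesseTrilin_vecMul (h : ∀ v, hesseForm a' b' (v ᵥ* M) = κ * hesseForm a b v)
    (u v w : Fin 3 → ℝ) :
    hesseTrilin a' b' (u ᵥ* M) (v ᵥ* M) (w ᵥ* M) = κ * hesseTrilin a b u v w := by
  simp only [hesseTrilin_eq_polarization, ← add_vecMul, h]
  ring

theorem det_hesseHessian_vecMul (h : ∀ v, hesseForm a' b' (v ᵥ* M) = κ * hesseForm a b v)
    (w : Fin 3 → ℝ) :
    M.det ^ 2 * (hesseHessian a' b' (w ᵥ* M)).det = κ ^ 3 * (hesseHessian a b w).det := by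
  have hcov : M * hesseHessian a' b' (w ᵥ* M) * Mᵀ = κ • hesseHessian a b w := by
    have hrow (k : Fin 3) : Pi.single k 1 ᵥ* M = M k := single_one_vecMul k M
    ext i j
    rw [mul_hesseHessian_mul_transpose_apply, ← hrow i, ← hrow j, hesseTrilin_vecMul h,
      Matrix.smul_apply, hesseHessian_apply, smul_eq_mul]
  have := congrArg det hcov
  rw [det_mul, det_mul, det_transpose, det_smul, Fintype.card_fin] at this
  linear_combination this

theorem det_ne_zero_of_hesseForm_vecMul (hb : b ≠ 0) (hκ : κ ≠ 0)
    (h : ∀ v, hesseForm a' b' (v ᵥ* M) = κ * hesseForm a b v) : M.det ≠ 0 := by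
  intro hM
  obtain ⟨v, hv, hvM⟩ := exists_vecMul_eq_zero_iff.mpr hM
  have hcoord (u w : Fin 3 → ℝ) : κ * hesseTrilin a b u v w = 0 := by
    rw [← hesseTrilin_vecMul h, hvM]
    simp [hesseTrilin]
  refine hv (funext fun i => ?_)
  fin_cases i
  · simpa [hesseTrilin, hb, hκ] using hcoord ![0, 1, 0] ![0, 0, 1]
  · simpa [hesseTrilin, hb, hκ] using hcoord ![1, 0, 0] ![0, 0, 1]
  · simpa [hesseTrilin, hb, hκ] using hcoord ![1, 0, 0] ![0, 1, 0]

/-- Since `det (hesseHessian 0 1) = 2 coordProd`, Hessian covariance turns the hypothesis into a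
second identity in the pencil; evaluating both at `(1,0,0)` and `(1,1,1)` gives the claim. -/
theorem coordProd_vecMul_eq (hM : M.det ≠ 0) {γ δ : ℝ}
    (h : ∀ v, coordProd (v ᵥ* M) = γ * cubeSum v + δ * coordProd v) :
    γ = 0 ∧ δ ^ 2 = M.det ^ 2 := by
  have hcov := det_hesseHessian_vecMul (M := M) (a' := 0) (b' := 1) (a := 6 * γ) (b := δ)
    (κ := 1) (fun v => by simp only [hesseForm, h]; ring)
  simp only [det_hesseHessian, h] at hcov
  have h₁ := hcov ![1, 0, 0]
  have h₂ := hcov ![1, 1, 1]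
  simp only [ne_eq, OfNat.ofNat_ne_zero, not_false_eq_true, zero_pow, one_pow, mul_one, zero_add,
    cubeSum, Fin.isValue, cons_val_zero, cons_val_one, add_zero, cons_val, coordProd, mul_zero,
    zero_mul, sub_zero, zero_sub, mul_neg, one_mul] at h₁ h₂
  have hγ : γ = 0 := by
    have : γ * (2 * M.det ^ 2 + 6 * δ ^ 2) = 0 := by linear_combination h₁
    exact (mul_eq_zero.mp this).resolve_right (by positivity)
  have hδ : δ ≠ 0 := by
    rintro rfl
    have := h (![1, 1, 1] ᵥ* M⁻¹)
    rw [vecMul_vecMul, nonsing_inv_mul _ (isUnit_iff_ne_zero.mpr hM), vecMul_one] at this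
    simp [coordProd, hγ] at this
  subst hγ
  refine ⟨rfl, mul_left_cancel₀ hδ ?_⟩
  linear_combination -h₂ / 2

theorem eq_of_hesseForm_vecMul {lam lam' : ℝ} (hlam : 0 < lam) (hlam' : 0 < lam') (hκ : κ ≠ 0)
    (h : ∀ v, hesseForm lam' 1 (v ᵥ* M) = κ * hesseForm lam 1 v) : lam = lam' := by
  have hM := det_ne_zero_of_hesseForm_vecMul one_ne_zero hκ h
  have hcov := det_hesseHessian_vecMul h
  simp only [det_hesseHessian] at hcov
  have hc : M.det ^ 2 * (lam' ^ 3 + 8) ≠ 0 := by positivity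
  -- `hesseForm lam' 1` and its Hessian span the pencil, so `coordProd ∘ M` lies in it.
  obtain ⟨hγ, hδ⟩ := coordProd_vecMul_eq hM
    (γ := (M.det ^ 2 * κ - κ ^ 3) * lam / (M.det ^ 2 * (lam' ^ 3 + 8)))
    (δ := (6 * M.det ^ 2 * κ + κ ^ 3 * (lam ^ 3 + 2)) / (M.det ^ 2 * (lam' ^ 3 + 8)))
    (fun v => by
      have hv := h v
      simp only [hesseForm] at hv
      field_simp
      linear_combination (M.det ^ 2 * hv + hcov v))
  have hdet : M.det ^ 2 = κ ^ 2 := by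
    have : κ * (M.det ^ 2 - κ ^ 2) * lam = 0 := by
      linear_combination (div_eq_zero_iff.mp hγ).resolve_right hc
    simpa [hκ, hlam.ne', sub_eq_zero] using this
  rw [hdet] at hδ
  field_simp at hδ
  have hsq : (lam ^ 3 + 8) ^ 2 = (lam' ^ 3 + 8) ^ 2 := by linear_combination hδ
  rw [pow_left_inj₀ (by positivity) (by positivity) two_ne_zero, add_left_inj,
    pow_left_inj₀ hlam.le hlam'.le three_ne_zero] at hsq
  exact hsq

end Covariance

structure IsHesseTriple {R : Type*} [CommRing R] [Algebra ℝ R] (lam : ℝ) (x₀ x₁ x₂ : R) :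
    Prop where
  sq₀ : x₀ ^ 2 = algebraMap ℝ R lam * (x₁ * x₂)
  sq₁ : x₁ ^ 2 = algebraMap ℝ R lam * (x₀ * x₂)
  sq₂ : x₂ ^ 2 = algebraMap ℝ R lam * (x₀ * x₁)

namespace IsHesseTriple

variable {R : Type*} [CommRing R] [Algebra ℝ R] {lam : ℝ} {x₀ x₁ x₂ : R}

theorem rotate (h : IsHesseTriple lam x₀ x₁ x₂) : IsHesseTriple lam x₁ x₂ x₀ where
  sq₀ := by rw [h.sq₁, mul_comm x₀]
  sq₁ := by rw [h.sq₂, mul_comm x₀]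
  sq₂ := h.sq₀

variable (hl : lam ^ 3 ≠ 1)
include hl

theorem sq_mul_eq_zero (h : IsHesseTriple lam x₀ x₁ x₂) :
    x₀ ^ 2 * x₁ = 0 ∧ x₀ ^ 2 * x₂ = 0 := by
  have hunit : (1 - lam ^ 3 : ℝ) ≠ 0 := sub_ne_zero.mpr hl.symm
  have hcancel {z : R} (hz : algebraMap ℝ R (1 - lam ^ 3) * z = 0) : z = 0 := by
    rwa [← Algebra.smul_def, smul_eq_zero, or_iff_right hunit] at hz
  set L := algebraMap ℝ R lam
  have h₀ := h.sq₀; have h₁ := h.sq₁; have h₂ := h.sq₂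
  constructor <;> apply hcancel <;> rw [map_sub, map_one, map_pow]
  · linear_combination x₁ * h₀ + L * x₂ * h₁ + L ^ 2 * x₀ * h₂
  · linear_combination x₂ * h₀ + L * x₁ * h₂ + L ^ 2 * x₀ * h₁

theorem pow_four_eq_zero (h : IsHesseTriple lam x₀ x₁ x₂) : x₀ ^ 4 = 0 := by
  linear_combination x₀ ^ 2 * h.sq₀
    + algebraMap ℝ R lam * x₂ * (h.sq_mul_eq_zero hl).1

theorem cube_eq (h : IsHesseTriple lam x₀ x₁ x₂) (v : Fin 3 → ℝ) :
    (v 0 • x₀ + v 1 • x₁ + v 2 • x₂) ^ 3 = hesseForm lam 1 v • (x₀ * x₁ * x₂) := by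
  obtain ⟨z₀₁, z₀₂⟩ := h.sq_mul_eq_zero hl
  obtain ⟨z₁₂, z₁₀⟩ := h.rotate.sq_mul_eq_zero hl
  obtain ⟨z₂₀, z₂₁⟩ := h.rotate.rotate.sq_mul_eq_zero hl
  simp only [Algebra.smul_def, hesseForm, cubeSum, coordProd, map_add, map_mul, map_pow,
    map_ofNat, map_one]
  set a := algebraMap ℝ R (v 0); set b := algebraMap ℝ R (v 1); set c := algebraMap ℝ R (v 2)
  linear_combination (a ^ 3 * x₀) * h.sq₀ + (b ^ 3 * x₁) * h.sq₁ + (c ^ 3 * x₂) * h.sq₂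
    + (3 * a ^ 2 * b) * z₀₁ + (3 * a ^ 2 * c) * z₀₂ + (3 * a * b ^ 2) * z₁₀
    + (3 * a * c ^ 2) * z₂₀ + (3 * b ^ 2 * c) * z₁₂ + (3 * b * c ^ 2) * z₂₁

end IsHesseTriple

/-- Coordinates in the basis `1, x₀, x₁, x₂, x₁x₂, x₀x₂, x₀x₁, x₀x₁x₂` of the quotient algebra;
the product below is its multiplication table. -/
@[ext] structure HesseModel (lam : ℝ) where
  a : ℝ
  b₀ : ℝ
  b₁ : ℝ
  b₂ : ℝ
  c₀ : ℝ
  c₁ : ℝ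
  c₂ : ℝ
  d : ℝ

namespace HesseModel

variable {lam : ℝ}

@[simps] instance : Zero (HesseModel lam) := ⟨⟨0, 0, 0, 0, 0, 0, 0, 0⟩⟩
@[simps] instance : One (HesseModel lam) := ⟨⟨1, 0, 0, 0, 0, 0, 0, 0⟩⟩
@[simps] instance : Add (HesseModel lam) := ⟨fun x y =>
  ⟨x.a + y.a, x.b₀ + y.b₀, x.b₁ + y.b₁, x.b₂ + y.b₂,
    x.c₀ + y.c₀, x.c₁ + y.c₁, x.c₂ + y.c₂, x.d + y.d⟩⟩
@[simps] instance : Neg (HesseModel lam) := ⟨fun x =>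
  ⟨-x.a, -x.b₀, -x.b₁, -x.b₂, -x.c₀, -x.c₁, -x.c₂, -x.d⟩⟩
@[simps] instance : Mul (HesseModel lam) := ⟨fun x y =>
  ⟨x.a * y.a,
   x.a * y.b₀ + x.b₀ * y.a,
   x.a * y.b₁ + x.b₁ * y.a,
   x.a * y.b₂ + x.b₂ * y.a,
   x.a * y.c₀ + x.c₀ * y.a + lam * x.b₀ * y.b₀ + x.b₁ * y.b₂ + x.b₂ * y.b₁,
   x.a * y.c₁ + x.c₁ * y.a + lam * x.b₁ * y.b₁ + x.b₀ * y.b₂ + x.b₂ * y.b₀,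
   x.a * y.c₂ + x.c₂ * y.a + lam * x.b₂ * y.b₂ + x.b₀ * y.b₁ + x.b₁ * y.b₀,
   x.a * y.d + x.d * y.a + x.b₀ * y.c₀ + x.b₁ * y.c₁ + x.b₂ * y.c₂
     + x.c₀ * y.b₀ + x.c₁ * y.b₁ + x.c₂ * y.b₂⟩⟩

instance : CommRing (HesseModel lam) where
  add_assoc _ _ _ := by ext <;> simp <;> ring
  zero_add _ := by ext <;> simp
  add_zero _ := by ext <;> simp
  add_comm _ _ := by ext <;> simp <;> ring
  neg_add_cancel _ := by ext <;> simp
  mul_assoc _ _ _ := by ext <;> simp <;> ring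
  one_mul _ := by ext <;> simp
  mul_one _ := by ext <;> simp
  left_distrib _ _ _ := by ext <;> simp <;> ring
  right_distrib _ _ _ := by ext <;> simp <;> ring
  mul_comm _ _ := by ext <;> simp <;> ring
  zero_mul _ := by ext <;> simp
  mul_zero _ := by ext <;> simp
  nsmul := nsmulRec
  zsmul := zsmulRec

@[simps] def ofReal (lam : ℝ) : ℝ →+* HesseModel lam where
  toFun r := ⟨r, 0, 0, 0, 0, 0, 0, 0⟩
  map_one' := rfl
  map_mul' _ _ := by ext <;> simp
  map_zero' := rfl
  map_add' _ _ := by ext <;> simp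

def gen (lam : ℝ) : Fin 3 → HesseModel lam :=
  ![⟨0, 1, 0, 0, 0, 0, 0, 0⟩, ⟨0, 0, 1, 0, 0, 0, 0, 0⟩, ⟨0, 0, 0, 1, 0, 0, 0, 0⟩]

end HesseModel

theorem X_mul_X_mul_X_notMem_Jdl (lam : ℝ) :
    (X 0 * X 1 * X 2 : MvPolynomial (Fin 3) ℝ) ∉ Jdl lam := by
  let φ := eval₂Hom (HesseModel.ofReal lam) (HesseModel.gen lam)
  have hker : Jdl lam ≤ RingHom.ker φ := by
    rw [Jdl, Ideal.span_le]
    rintro _ (rfl | rfl | rfl) <;> ext <;> simp [φ, HesseModel.gen, pow_two, sub_eq_add_neg]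
  intro hmem
  simpa [φ, HesseModel.gen, HesseModel.ext_iff] using hker hmem

namespace Jdl

variable (lam : ℝ)

noncomputable abbrev gen (i : Fin 3) : MvPolynomial (Fin 3) ℝ ⧸ Jdl lam :=
  Ideal.Quotient.mk _ (X i)

noncomputable def lin (v : Fin 3 → ℝ) : MvPolynomial (Fin 3) ℝ ⧸ Jdl lam := ∑ i, v i • gen lam i

noncomputable def vol : MvPolynomial (Fin 3) ℝ ⧸ Jdl lam := gen lam 0 * gen lam 1 * gen lam 2

theorem isHesseTriple_gen : IsHesseTriple lam (gen lam 0) (gen lam 1) (gen lam 2) := by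
  have hrel {p q : MvPolynomial (Fin 3) ℝ} (h : p - C lam * q ∈ Jdl lam) :
      Ideal.Quotient.mk (Jdl lam) p = algebraMap ℝ _ lam * Ideal.Quotient.mk (Jdl lam) q := by
    rw [← Ideal.Quotient.mk_algebraMap, algebraMap_eq, ← map_mul, Ideal.Quotient.eq]
    exact h
  refine ⟨?_, ?_, ?_⟩ <;> simp only [gen, ← map_pow, ← map_mul] <;> apply hrel <;>
    exact Ideal.subset_span (by simp)

theorem vol_ne_zero : vol lam ≠ 0 := by
  rw [vol, ← map_mul, ← map_mul, Ne, Ideal.Quotient.eq_zero_iff_mem]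
  exact X_mul_X_mul_X_notMem_Jdl lam

variable {lam}

theorem lin_cube (hl : lam ^ 3 ≠ 1) (v : Fin 3 → ℝ) :
    lin lam v ^ 3 = hesseForm lam 1 v • vol lam := by
  rw [lin, Fin.sum_univ_three, (isHesseTriple_gen lam).cube_eq hl, vol]

theorem finiteDimensional (hl : lam ^ 3 ≠ 1) :
    FiniteDimensional ℝ (MvPolynomial (Fin 3) ℝ ⧸ Jdl lam) := by
  have hgen : ∀ i, IsIntegral ℝ (gen lam i) := by
    have hint {y₀ y₁ y₂ : MvPolynomial (Fin 3) ℝ ⧸ Jdl lam} (hy : IsHesseTriple lam y₀ y₁ y₂) :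
        IsIntegral ℝ y₀ :=
      IsIntegral.of_pow four_pos (by rw [hy.pow_four_eq_zero hl]; exact isIntegral_zero)
    have h := isHesseTriple_gen lam
    intro i
    fin_cases i
    exacts [hint h, hint h.rotate, hint h.rotate.rotate]
  have : Algebra.IsIntegral ℝ (MvPolynomial (Fin 3) ℝ ⧸ Jdl lam) := by
    refine ⟨fun z => ?_⟩
    obtain ⟨p, rfl⟩ := Ideal.Quotient.mk_surjective z
    induction p using MvPolynomial.induction_on with
    | C a => exact isIntegral_algebraMap
    | add p q hp hq => simpa using hp.add hq
    | mul_X p i hp => simpa using hp.mul (hgen i)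
  exact Algebra.IsIntegral.finite

theorem mem_degTwo {p : MvPolynomial (Fin 3) ℝ ⧸ Jdl lam} :
    p ∈ degTwo lam ↔ ∃ v, lin lam v = p := by
  have : ({gen lam 0, gen lam 1, gen lam 2} : Set _) = Set.range (gen lam) := by
    ext; simp [Fin.exists_fin_succ, eq_comm]
  rw [degTwo, this, Submodule.mem_span_range_iff_exists_fun]
  rfl

variable {lam' : ℝ}

theorem lin_single (i : Fin 3) : lin lam (Pi.single i 1) = gen lam i := by
  simp [lin, Pi.single_apply]

theorem map_lin {M : Matrix (Fin 3) (Fin 3) ℝ}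
    (f : (MvPolynomial (Fin 3) ℝ ⧸ Jdl lam) →ₗ[ℝ] (MvPolynomial (Fin 3) ℝ ⧸ Jdl lam'))
    (hf : ∀ i, f (gen lam i) = lin lam' (M i)) (v : Fin 3 → ℝ) :
    f (lin lam v) = lin lam' (v ᵥ* M) := by
  simp only [lin, map_sum, map_smul, hf, Finset.smul_sum, smul_smul, vecMul, dotProduct,
    Finset.sum_smul]
  exact Finset.sum_comm

theorem eq_of_algEquiv_map_degTwo (hlam : 1 < lam) (hlam' : 1 < lam')
    (e : (MvPolynomial (Fin 3) ℝ ⧸ Jdl lam) ≃ₐ[ℝ] (MvPolynomial (Fin 3) ℝ ⧸ Jdl lam'))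
    (he : ∀ p ∈ degTwo lam, e p ∈ degTwo lam') : lam = lam' := by
  have hl : lam ^ 3 ≠ 1 := (one_lt_pow₀ hlam three_ne_zero).ne'
  have hl' : lam' ^ 3 ≠ 1 := (one_lt_pow₀ hlam' three_ne_zero).ne'
  choose M hM using fun i =>
    mem_degTwo.mp (he _ (mem_degTwo.mpr ⟨_, lin_single (lam := lam) i⟩))
  have he_lin := map_lin e.toLinearMap (fun i => (hM i).symm)
  have he_cube (v : Fin 3 → ℝ) :
      hesseForm lam' 1 (v ᵥ* M) • vol lam' = hesseForm lam 1 v • e (vol lam) := by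
    rw [← lin_cube hl', ← map_smul, ← lin_cube hl, map_pow]
    exact congrArg (· ^ 3) (he_lin v).symm
  obtain ⟨κ, he_vol⟩ : ∃ κ : ℝ, e (vol lam) = κ • vol lam' := by
    have h₀ : hesseForm lam 1 (Pi.single 0 1) = lam := by simp [hesseForm, cubeSum, coordProd]
    refine ⟨lam⁻¹ * hesseForm lam' 1 (Pi.single 0 1 ᵥ* M), ?_⟩
    rw [mul_smul, he_cube, h₀, inv_smul_smul₀ (by positivity)]
  have hκ : κ ≠ 0 := by
    intro hκ
    rw [hκ, zero_smul, map_eq_zero_iff _ e.injective] at he_vol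
    exact vol_ne_zero lam he_vol
  refine eq_of_hesseForm_vecMul (M := M) (by positivity) (by positivity) hκ fun v => ?_
  apply smul_left_injective ℝ (vol_ne_zero lam')
  simp only [he_cube, he_vol, smul_smul, mul_comm]

end Jdl

/-- There are infinitely many pairwise non-isomorphic (as graded ℝ-algebras)
finite-dimensional algebras `ℝ[x₁,x₂,x₃]/(x₁²−λx₂x₃, x₂²−λx₁x₃, x₃²−λx₁x₂)` with
`λ ≠ 1`: outside a finite exceptional set, distinct parameters give algebras
admitting no algebra isomorphism preserving the degree-2 part. -/
theorem stmt_19 :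
    ∃ L : Set ℝ, L.Infinite ∧ (1 : ℝ) ∉ L ∧
      (∀ lam ∈ L, FiniteDimensional ℝ (MvPolynomial (Fin 3) ℝ ⧸ Jdl lam)) ∧
      ∀ lam ∈ L, ∀ lam' ∈ L, lam ≠ lam' →
        ¬ ∃ e : (MvPolynomial (Fin 3) ℝ ⧸ Jdl lam) ≃ₐ[ℝ]
              (MvPolynomial (Fin 3) ℝ ⧸ Jdl lam'),
            ∀ p ∈ degTwo lam, e p ∈ degTwo lam' := by
  refine ⟨Set.Ioi 1, Set.Ioi_infinite 1, Set.self_notMem_Ioi, fun lam hlam => ?_, ?_⟩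
  · exact Jdl.finiteDimensional (one_lt_pow₀ hlam three_ne_zero).ne'
  · rintro lam hlam lam' hlam' hne ⟨e, he⟩
    exact hne (Jdl.eq_of_algEquiv_map_degTwo hlam hlam' e he)
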